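/- arXiv:math/0102171 — 2 statements merged into one kernel-verified Lean document; each statement's English description precedes it below -/
import Mathlib

section
/- Let h be a real Lie algebra of dimension 2k+1 equipped with an ad-invariant inner product ⟨·,·⟩, and suppose η ∈ h* is an algebraic contact form (η ∧ (dη)^k ≠ 0, dη(X,Y) = −η([X,Y])). Let X̄₀ ∈ h be the vector with η(X) = ⟨X, X̄₀⟩ for all X. Then the centralizer of X̄₀ equals the line ℝ·X̄₀: if [X̄₀, ξ] = 0 then ξ ∈ ℝ·X̄₀. -/
open scoped TensorProduct

namespace GLB

variable {L : Type*} [LieRing L] [LieAlgebra ℝ L]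

/-- The bilinear form `dη(X, Y) = -η ⁅X, Y⁆`. -/
noncomputable def dEta (η : L →ₗ[ℝ] ℝ) : L →ₗ[ℝ] L →ₗ[ℝ] ℝ :=
  LinearMap.mk₂ ℝ (fun x y => -η ⁅x, y⁆)
    (fun x x' y => by simp [add_lie]; ring)
    (fun c x y => by simp [smul_lie])
    (fun x y y' => by simp [lie_add]; ring)
    (fun c x y => by simp [lie_smul])

@[simp] lemma dEta_apply (η : L →ₗ[ℝ] ℝ) (x y : L) : dEta η x y = -η ⁅x, y⁆ := rfl

/-- An alternating bilinear form, as an alternating map on `Fin 2`. -/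
noncomputable def bilinAlt (B : L →ₗ[ℝ] L →ₗ[ℝ] ℝ) (hB : ∀ x, B x x = 0) :
    L [⋀^Fin 2]→ₗ[ℝ] ℝ :=
  { toFun := fun v => B (v 0) (v 1)
    map_update_add' := by
      intro dec m i x y
      fin_cases i <;> simp [Function.update_apply]
    map_update_smul' := by
      intro dec m i c x
      fin_cases i <;> simp [Function.update_apply]
    map_eq_zero_of_eq' := by
      intro v i j hv hij
      have h01 : v 0 = v 1 := by fin_cases i <;> fin_cases j <;> simp_all
      show B (v 0) (v 1) = 0
      rw [← h01]; exact hB _ }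

@[simp] lemma bilinAlt_apply (B : L →ₗ[ℝ] L →ₗ[ℝ] ℝ) (hB : ∀ x, B x x = 0) (v : Fin 2 → L) :
    bilinAlt B hB v = B (v 0) (v 1) := rfl

/-- `dη` as an alternating `2`-form. -/
noncomputable def dEtaAlt (η : L →ₗ[ℝ] ℝ) : L [⋀^Fin 2]→ₗ[ℝ] ℝ :=
  bilinAlt (dEta η) (fun x => by simp)

/-- A linear form, as an alternating `1`-form. -/
noncomputable def oneAlt (η : L →ₗ[ℝ] ℝ) : L [⋀^Fin 1]→ₗ[ℝ] ℝ :=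
  AlternatingMap.ofSubsingleton ℝ L ℝ 0 η

/-- The wedge product of two real-valued alternating forms. -/
noncomputable def wedge {m n : ℕ} (f : L [⋀^Fin m]→ₗ[ℝ] ℝ) (g : L [⋀^Fin n]→ₗ[ℝ] ℝ) :
    L [⋀^Fin (m + n)]→ₗ[ℝ] ℝ :=
  ((TensorProduct.lid ℝ ℝ).toLinearMap.compAlternatingMap (f.domCoprod g)).domDomCongr
    finSumFinEquiv

/-- The `k`-th wedge power of an alternating `2`-form. -/
noncomputable def wpow (f : L [⋀^Fin 2]→ₗ[ℝ] ℝ) : (k : ℕ) → L [⋀^Fin (2 * k)]→ₗ[ℝ] ℝ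
  | 0 => AlternatingMap.constOfIsEmpty ℝ L (Fin 0) 1
  | k + 1 => wedge (wpow f k) f

/-- `η` is an algebraic contact form (on a `(2k+1)`-dimensional Lie algebra):
`η ∧ (dη)^k ≠ 0`. -/
noncomputable def IsContact (η : L →ₗ[ℝ] ℝ) (k : ℕ) : Prop :=
  wedge (oneAlt η) (wpow (dEtaAlt η) k) ≠ 0


section Aux

variable {L : Type*} [LieRing L] [LieAlgebra ℝ L]

/-- `ζ` annihilates an alternating form: plugging `ζ` in any slot gives `0`. -/
def Ann (ζ : L) {n : ℕ} (f : L [⋀^Fin n]→ₗ[ℝ] ℝ) : Prop :=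
  ∀ (v : Fin n → L) (i : Fin n), v i = ζ → f v = 0

lemma ann_wedge {m n : ℕ} {ζ : L} {f : L [⋀^Fin m]→ₗ[ℝ] ℝ} {g : L [⋀^Fin n]→ₗ[ℝ] ℝ}
    (hf : Ann ζ f) (hg : Ann ζ g) : Ann ζ (wedge f g) := by
  intro v j hvj
  show (TensorProduct.lid ℝ ℝ) ((f.domCoprod g) (fun i => v (finSumFinEquiv i))) = 0
  rw [AlternatingMap.domCoprod_apply, MultilinearMap.sum_apply]
  have hz : ∀ σ : Equiv.Perm.ModSumCongr (Fin m) (Fin n),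
      AlternatingMap.domCoprod.summand f g σ (fun i => v (finSumFinEquiv i)) = 0 := ?_
  · rw [Finset.sum_eq_zero fun σ _ => hz σ]
    exact (TensorProduct.lid ℝ ℝ).map_zero
  intro σ
  induction σ using Quotient.inductionOn' with
  | h π =>
    rw [AlternatingMap.domCoprod.summand_mk'']
    simp only [MultilinearMap.smul_apply, MultilinearMap.domDomCongr_apply,
      MultilinearMap.domCoprod_apply, AlternatingMap.coe_multilinearMap, Function.comp]
    rcases hs : π⁻¹ (finSumFinEquiv.symm j) with i | i
    · have : π (Sum.inl i) = finSumFinEquiv.symm j := by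
        rw [← hs]; simp
      have hz : f (fun i => v (finSumFinEquiv (π (Sum.inl i)))) = 0 := by
        refine hf _ i ?_
        rw [this]; simpa using hvj
      rw [hz, TensorProduct.zero_tmul, smul_zero]
    · have : π (Sum.inr i) = finSumFinEquiv.symm j := by
        rw [← hs]; simp
      have hz : g (fun i => v (finSumFinEquiv (π (Sum.inr i)))) = 0 := by
        refine hg _ i ?_
        rw [this]; simpa using hvj
      rw [hz, TensorProduct.tmul_zero, smul_zero]

lemma alt_eq_zero_of_ann {n : ℕ} [FiniteDimensional ℝ L] (hdim : Module.finrank ℝ L = n)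
    (f : L [⋀^Fin n]→ₗ[ℝ] ℝ) {ζ : L} (hζ : ζ ≠ 0) (hann : Ann ζ f) : f = 0 := by
  classical
  have hli : LinearIndepOn ℝ id ({ζ} : Set L) := LinearIndepOn.singleton hζ
  let b := Module.Basis.extend hli
  have hmem : ζ ∈ hli.extend (Set.subset_univ _) := hli.subset_extend _ rfl
  have hcard : Fintype.card (hli.extend (Set.subset_univ ({ζ} : Set L))) = n := by
    rw [← hdim, Module.finrank_eq_card_basis b]
  let e := Fintype.equivFinOfCardEq hcard
  let b' := b.reindex e
  refine Module.Basis.ext_alternating b' fun w hw => ?_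
  have hsurj : Function.Surjective w := by
    have := Finite.injective_iff_surjective.mp hw
    exact this
  obtain ⟨i, hi⟩ := hsurj (e ⟨ζ, hmem⟩)
  have : b' (w i) = ζ := by
    rw [hi]
    simp only [b', Module.Basis.reindex_apply, Equiv.symm_apply_apply, e]
    exact Module.Basis.extend_apply_self hli ⟨ζ, hmem⟩
  simpa using hann (fun i => b' (w i)) i this

lemma ann_oneAlt {ζ : L} {η : L →ₗ[ℝ] ℝ} (hζ : η ζ = 0) : Ann ζ (oneAlt η) := by
  intro v i hvi
  have hi : i = 0 := Subsingleton.elim _ _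
  show η (v 0) = 0
  rw [← hi, hvi, hζ]

lemma ann_dEtaAlt {ζ : L} {η : L →ₗ[ℝ] ℝ} (hζ : ∀ y, η ⁅ζ, y⁆ = 0) : Ann ζ (dEtaAlt η) := by
  intro v i hvi
  show dEta η (v 0) (v 1) = 0
  fin_cases i
  · have h0 : v 0 = ζ := hvi
    rw [h0]; simp [hζ]
  · have h1 : v 1 = ζ := hvi
    rw [h1]
    have hsk : ⁅v 0, ζ⁆ = -⁅ζ, v 0⁆ := (lie_skew _ _).symm
    rw [dEta_apply, hsk, map_neg, neg_neg, hζ]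

lemma ann_wpow {ζ : L} {η : L →ₗ[ℝ] ℝ} (hζ : ∀ y, η ⁅ζ, y⁆ = 0) (k : ℕ) :
    Ann ζ (wpow (dEtaAlt η) k) := by
  induction k with
  | zero => intro v i _; exact i.elim0
  | succ k ih => exact ann_wedge ih (ann_dEtaAlt hζ)

end Aux


theorem statement11 {h : Type*} [LieRing h] [LieAlgebra ℝ h] [FiniteDimensional ℝ h]
    (B : h →ₗ[ℝ] h →ₗ[ℝ] ℝ)
    (hsymm : ∀ X Y : h, B X Y = B Y X)
    (hpos : ∀ X : h, X ≠ 0 → 0 < B X X)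
    (hinv : ∀ X Y Z : h, B ⁅X, Y⁆ Z = -B Y ⁅X, Z⁆)
    (k : ℕ) (hdim : Module.finrank ℝ h = 2 * k + 1)
    (η : h →ₗ[ℝ] ℝ) (hη : IsContact η k)
    (X₀ : h) (hX₀ : ∀ X : h, η X = B X X₀) :
    ∀ ξ : h, ⁅X₀, ξ⁆ = 0 → ∃ c : ℝ, ξ = c • X₀ := by
  have key : ∀ ζ : h, η ζ = 0 → (∀ y, η ⁅ζ, y⁆ = 0) → ζ = 0 := by
    intro ζ h1 h2
    by_contra hζ
    refine hη (alt_eq_zero_of_ann (by omega) _ hζ ?_)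
    exact ann_wedge (ann_oneAlt h1) (ann_wpow h2 k)
  have hX₀ne : X₀ ≠ 0 := by
    intro h0
    have hη0 : ∀ X : h, η X = 0 := by
      intro X; rw [hX₀ X, h0]; simp
    have hnt : Nontrivial h := by
      apply Module.nontrivial_of_finrank_pos (R := ℝ)
      omega
    obtain ⟨ζ, hζ⟩ := exists_ne (0 : h)
    exact hζ (key ζ (hη0 ζ) fun y => hη0 _)
  intro ξ hξ
  have hBpos : 0 < B X₀ X₀ := hpos X₀ hX₀ne
  set c : ℝ := η ξ / B X₀ X₀ with hc
  refine ⟨c, ?_⟩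
  have hζ0 : ξ - c • X₀ = 0 := by
    apply key
    · have : η X₀ = B X₀ X₀ := hX₀ X₀
      simp only [map_sub, map_smul, smul_eq_mul, this, hc]
      field_simp
      ring
    · intro y
      have hbr : ⁅ξ - c • X₀, X₀⁆ = 0 := by
        have h1 : ⁅ξ, X₀⁆ = 0 := by
          rw [← lie_skew, hξ, neg_zero]
        simp [h1]
      rw [hX₀, hinv, hbr]
      simp
  have := sub_eq_zero.mp hζ0
  exact this

end GLB
end

section
/- Let h be a compact real Lie algebra (admitting an ad-invariant inner product and of the form [h,h] ⊕ Z(h) with [h,h] semisimple of compact type). If h admits a nondegenerate 2-cocycle Ω (alternating bilinear with Ω([X,Y],Z) + Ω([Y,Z],X) + Ω([Z,X],Y) = 0 and Ω(X,·) = 0 implies X = 0), then h is abelian. -/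
open LinearMap

attribute [local instance 100] LieRing.ofAssociativeRing

/-- If `T` is skew with respect to a positive definite symmetric bilinear form and
`tr (T ∘ T) = 0`, then `T = 0`. -/
lemma skew_trace_sq_eq_zero {h : Type*} [AddCommGroup h] [Module ℝ h] [FiniteDimensional ℝ h]
    (B : LinearMap.BilinForm ℝ h)
    (hsymm : ∀ X Y : h, B X Y = B Y X)
    (hpos : ∀ X : h, X ≠ 0 → 0 < B X X)
    (T : h →ₗ[ℝ] h) (hT : ∀ x y : h, B (T x) y = - B x (T y))
    (htr : LinearMap.trace ℝ h (T * T) = 0) : T = 0 := by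
  haveI : Invertible (2 : ℝ) := invertibleOfNonzero two_ne_zero
  have hBsymm : LinearMap.IsSymm B := ⟨fun x y => by simpa using hsymm x y⟩
  obtain ⟨v, hv⟩ := LinearMap.BilinForm.exists_orthogonal_basis hBsymm
  have hvo : ∀ i j, i ≠ j → B (v i) (v j) = 0 := fun i j hij =>
    LinearMap.isOrthoᵢ_def.mp hv i j hij
  set M := LinearMap.toMatrix v v T with hMdef
  set d : Fin (Module.finrank ℝ h) → ℝ := fun i => B (v i) (v i) with hd_def
  have hd : ∀ i, 0 < d i := fun i => hpos _ (v.ne_zero i)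
  have hBv : ∀ (x : h) (j), B x (v j) = v.repr x j * d j := by
    intro x j
    conv_lhs => rw [← Module.Basis.sum_repr v x]
    rw [map_sum, LinearMap.sum_apply]
    simp_rw [map_smul, LinearMap.smul_apply, smul_eq_mul]
    rw [Finset.sum_eq_single j (fun k _ hk => by rw [hvo k j hk, mul_zero])
      (fun hj => absurd (Finset.mem_univ j) hj)]
  have hBv' : ∀ (j) (x : h), B (v j) x = v.repr x j * d j := by
    intro j x; rw [hsymm]; exact hBv x j
  have hrel : ∀ i j, M j i * d j = -(M i j * d i) := by
    intro i j
    have h1 : B (T (v i)) (v j) = M j i * d j := by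
      rw [hBv]; rw [hMdef]; rw [LinearMap.toMatrix_apply]
    have h2 : B (v i) (T (v j)) = M i j * d i := by
      rw [hsymm, hBv]; rw [hMdef]; rw [LinearMap.toMatrix_apply]
    rw [← h1, ← h2, hT]
  have hM0 : ∀ i k, M i k = 0 := by
    have hterm : ∀ i k, M i k * M k i * d k = -((M i k) ^ 2 * d i) := by
      intro i k
      have hik := hrel i k
      calc M i k * M k i * d k = M i k * (M k i * d k) := by ring
        _ = M i k * (-(M i k * d i)) := by rw [hik]
        _ = -((M i k) ^ 2 * d i) := by ring
    have htnp : ∀ i k, M i k * M k i ≤ 0 := by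
      intro i k
      by_contra hc
      push_neg at hc
      have h1 : 0 < M i k * M k i * d k := mul_pos hc (hd k)
      have h2 : -((M i k) ^ 2 * d i) ≤ 0 := by nlinarith [sq_nonneg (M i k), (hd i).le]
      rw [hterm i k] at h1; linarith
    have hsum : ∑ i, ∑ k, M i k * M k i = 0 := by
      have := htr
      rw [LinearMap.trace_eq_matrix_trace ℝ v, LinearMap.toMatrix_mul] at this
      simpa [Matrix.trace, Matrix.diag, Matrix.mul_apply] using this
    have houter : ∀ i ∈ Finset.univ, ∑ k, M i k * M k i ≤ 0 := by
      intro i _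
      exact Finset.sum_nonpos fun k _ => htnp i k
    have hzero : ∀ i ∈ (Finset.univ : Finset (Fin (Module.finrank ℝ h))),
        ∑ k, M i k * M k i = 0 :=
      (Finset.sum_eq_zero_iff_of_nonpos houter).mp hsum
    intro i k
    have hzk : M i k * M k i = 0 := by
      have := (Finset.sum_eq_zero_iff_of_nonpos fun k _ => htnp i k).mp
        (hzero i (Finset.mem_univ i)) k (Finset.mem_univ k)
      exact this
    have := hterm i k
    rw [hzk, zero_mul] at this
    have hsq : (M i k) ^ 2 * d i = 0 := by linarith
    have : (M i k) ^ 2 = 0 := by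
      rcases mul_eq_zero.mp hsq with h' | h'
      · exact h'
      · exact absurd h' (ne_of_gt (hd i))
    exact pow_eq_zero_iff (two_ne_zero) |>.mp this
  have hMz : M = 0 := by
    ext i k; exact hM0 i k
  have hT0 : LinearMap.toMatrix v v T = LinearMap.toMatrix v v (0 : h →ₗ[ℝ] h) := by
    rw [map_zero, ← hMdef, hMz]
  exact (LinearMap.toMatrix v v).injective hT0

theorem statement12 {h : Type*} [LieRing h] [LieAlgebra ℝ h] [FiniteDimensional ℝ h]
    (B : h →ₗ[ℝ] h →ₗ[ℝ] ℝ)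
    (hsymm : ∀ X Y : h, B X Y = B Y X)
    (hpos : ∀ X : h, X ≠ 0 → 0 < B X X)
    (hinv : ∀ X Y Z : h, B ⁅X, Y⁆ Z = -B Y ⁅X, Z⁆)
    (Ω : h →ₗ[ℝ] h →ₗ[ℝ] ℝ) (hΩalt : ∀ x, Ω x x = 0)
    (hΩcoc : ∀ X Y Z : h, Ω ⁅X, Y⁆ Z + Ω ⁅Y, Z⁆ X + Ω ⁅Z, X⁆ Y = 0)
    (hΩnd : ∀ X : h, (∀ Y : h, Ω X Y = 0) → X = 0) :
    ∀ X Y : h, ⁅X, Y⁆ = 0 := by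
  classical
  -- Nondegeneracy of B
  have hBnd : LinearMap.BilinForm.Nondegenerate B := by
    refine ⟨fun x hx => ?_, fun x hx => ?_⟩
    all_goals
      by_contra hx0
      have := hpos x hx0
      rw [hx x] at this
      exact lt_irrefl 0 this
  -- Ω is skew
  have hΩskew : ∀ x y : h, Ω x y = -Ω y x := by
    intro x y
    have := hΩalt (x + y)
    simp only [map_add, LinearMap.add_apply, hΩalt x, hΩalt y] at this
    linarith
  -- the operator φ with B (φ x) y = Ω x y
  set φ : h →ₗ[ℝ] h :=
    (((LinearMap.BilinForm.toDual B hBnd).symm : Module.Dual ℝ h →ₗ[ℝ] h).comp Ω) with hφdef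
  have hφ : ∀ x y : h, B (φ x) y = Ω x y := by
    intro x y
    simp only [hφdef, LinearMap.comp_apply, LinearEquiv.coe_coe]
    exact LinearMap.BilinForm.apply_toDual_symm_apply (hB := hBnd) (Ω x) y
  have hφinj : ∀ x : h, φ x = 0 → x = 0 := by
    intro x hx
    apply hΩnd
    intro y
    rw [← hφ, hx, map_zero, LinearMap.zero_apply]
  -- φ is a derivation
  have hder : ∀ x y : h, φ ⁅x, y⁆ = ⁅φ x, y⁆ + ⁅x, φ y⁆ := by
    intro x y
    have key : ∀ z : h, B (φ ⁅x, y⁆ - (⁅φ x, y⁆ + ⁅x, φ y⁆)) z = 0 := by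
      intro z
      have e0 : B (φ ⁅x, y⁆) z = Ω ⁅x, y⁆ z := hφ _ _
      have e1 : B ⁅φ x, y⁆ z = -Ω ⁅y, z⁆ x := by
        have h1 : (⁅φ x, y⁆ : h) = -⁅y, φ x⁆ := (lie_skew _ _).symm
        rw [h1, map_neg, LinearMap.neg_apply, hinv y (φ x) z, neg_neg, hφ]
        exact hΩskew x ⁅y, z⁆
      have e2 : B ⁅x, φ y⁆ z = -Ω ⁅z, x⁆ y := by
        rw [hinv x (φ y) z, hφ]
        have h2 : (⁅x, z⁆ : h) = -⁅z, x⁆ := (lie_skew _ _).symm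
        rw [h2, map_neg, neg_neg]
        exact hΩskew y ⁅z, x⁆
      have hc := hΩcoc x y z
      simp only [map_sub, map_add, LinearMap.sub_apply, LinearMap.add_apply]
      rw [e0, e1, e2]
      linarith
    have := hBnd.1 _ key
    rwa [sub_eq_zero] at this
  -- ad as a linear map
  set adL : h →ₗ[ℝ] Module.End ℝ h := (LieAlgebra.ad ℝ h).toLinearMap with hadL
  have hadL_apply : ∀ x y : h, adL x y = ⁅x, y⁆ := fun x y => rfl
  -- the trace form κ
  set κ : LinearMap.BilinForm ℝ h :=
    (((LinearMap.mul ℝ (Module.End ℝ h)).compl₁₂ adL adL).compr₂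
      (LinearMap.trace ℝ h)) with hκdef
  have hκ : ∀ x y : h, κ x y = LinearMap.trace ℝ h (adL x * adL y) := by
    intro x y
    simp [hκdef, LinearMap.compr₂_apply, LinearMap.compl₁₂_apply, LinearMap.mul_apply']
  -- ad x is skew w.r.t. B
  have hadskew : ∀ x u v : h, B (adL x u) v = -B u (adL x v) := by
    intro x u v
    rw [hadL_apply, hadL_apply]
    exact hinv x u v
  -- κ x x = 0 implies ad x = 0
  have hκzero : ∀ x : h, κ x x = 0 → adL x = 0 := by
    intro x hx
    refine skew_trace_sq_eq_zero B hsymm hpos (adL x) (hadskew x) ?_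
    rw [← hκ]; exact hx
  -- the linear functional f w = tr (φ ∘ ad w)
  set f : h →ₗ[ℝ] ℝ :=
    (LinearMap.trace ℝ h).comp ((LinearMap.mulLeft ℝ φ).comp adL) with hfdef
  have hf : ∀ w : h, f w = LinearMap.trace ℝ h (φ * adL w) := by
    intro w
    rfl
  -- the span of brackets
  set s : Submodule ℝ h := Submodule.span ℝ {w : h | ∃ x y : h, ⁅x, y⁆ = w} with hsdef
  have hmem_s : ∀ x y : h, ⁅x, y⁆ ∈ s := fun x y =>
    Submodule.subset_span ⟨x, y, rfl⟩
  -- orthogonal to s implies central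
  have hcentral : ∀ w : h, (∀ u ∈ s, B u w = 0) → ∀ x : h, ⁅x, w⁆ = 0 := by
    intro w hw x
    apply hBnd.1
    intro z
    rw [hsymm]
    have h0 : B ⁅x, z⁆ w = 0 := hw _ (hmem_s x z)
    linarith [hinv x z w]
  -- central implies orthogonal to s
  have hcent_orth : ∀ w : h, (∀ x : h, ⁅w, x⁆ = 0) → ∀ u ∈ s, B u w = 0 := by
    intro w hw
    have : s ≤ LinearMap.ker (B.flip w) := by
      rw [hsdef, Submodule.span_le]
      rintro u ⟨x, y, rfl⟩
      simp only [SetLike.mem_coe, LinearMap.mem_ker, LinearMap.flip_apply]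
      rw [hinv x y w]
      have : (⁅x, w⁆ : h) = -⁅w, x⁆ := (lie_skew _ _).symm
      rw [this, hw x, neg_zero, map_zero, neg_zero]
    intro u hu
    have := this hu
    simpa using this
  -- B restricted to s is nondegenerate
  have hBsnd : LinearMap.BilinForm.Nondegenerate (LinearMap.BilinForm.restrict B s) := by
    refine ⟨?_, ?_⟩
    all_goals
      rintro ⟨x, hx⟩ hker
      have hxx : B x x = 0 := hker ⟨x, hx⟩
      have : x = 0 := by
        by_contra hx0
        exact absurd hxx (ne_of_gt (hpos x hx0))
      exact Subtype.ext this
  have hBrefl : LinearMap.BilinForm.IsRefl B := by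
    intro x y hxy
    rw [hsymm]; exact hxy
  have hcompl : IsCompl s (LinearMap.BilinForm.orthogonal B s) :=
    LinearMap.BilinForm.isCompl_orthogonal_of_restrict_nondegenerate hBrefl hBsnd
  -- κ restricted to s is nondegenerate
  have hκsnd : LinearMap.BilinForm.Nondegenerate (LinearMap.BilinForm.restrict κ s) := by
    refine ⟨?_, ?_⟩
    all_goals
      rintro ⟨x, hx⟩ hker
      have hxx : κ x x = 0 := hker ⟨x, hx⟩
      have had : adL x = 0 := hκzero x hxx
      have hcent : ∀ z : h, ⁅x, z⁆ = 0 := by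
        intro z
        have := congrArg (fun g => g z) had
        simpa [hadL_apply] using this
      have horth : ∀ u ∈ s, B u x = 0 := hcent_orth x hcent
      have hxx0 : B x x = 0 := horth x hx
      have : x = 0 := by
        by_contra hx0
        exact absurd hxx0 (ne_of_gt (hpos x hx0))
      exact Subtype.ext this
  -- find a ∈ s with κ a w = f w for all w ∈ s
  set a₀ : s := ((LinearMap.BilinForm.restrict κ s).toDual hκsnd).symm (f.comp s.subtype) with ha₀def
  set a : h := (a₀ : h) with hadef
  have ha_s : ∀ n : s, κ a (n : h) = f (n : h) := by
    intro n
    have := LinearMap.BilinForm.apply_toDual_symm_apply (hB := hκsnd) (f.comp s.subtype) n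
    simpa [LinearMap.BilinForm.restrict_apply] using this
  -- extend to all of h
  have ha : ∀ w : h, κ a w = f w := by
    intro w
    have hw : w ∈ s ⊔ LinearMap.BilinForm.orthogonal B s := by
      rw [hcompl.sup_eq_top]; trivial
    obtain ⟨p, hp, q, hq, rfl⟩ := Submodule.mem_sup.mp hw
    have hqcent : ∀ x : h, ⁅x, q⁆ = 0 := hcentral q (fun u hu => hq u hu) 
    have hadq : adL q = 0 := by
      ext z
      have : (⁅q, z⁆ : h) = -⁅z, q⁆ := (lie_skew _ _).symm
      simp [hadL_apply, this, hqcent z]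
    have h1 : κ a q = 0 := by rw [hκ, hadq, mul_zero, map_zero]
    have h2 : f q = 0 := by rw [hf, hadq, mul_zero, map_zero]
    rw [map_add, map_add, h1, h2, add_zero, add_zero]
    exact ha_s ⟨p, hp⟩
  -- the operator E = φ - ad a
  set E : h →ₗ[ℝ] h := φ - adL a with hEdef
  have hEder : ∀ x y : h, E ⁅x, y⁆ = ⁅E x, y⁆ + ⁅x, E y⁆ := by
    intro x y
    simp only [hEdef, LinearMap.sub_apply, hadL_apply]
    rw [hder x y]
    have hleib : (⁅a, ⁅x, y⁆⁆ : h) = ⁅⁅a, x⁆, y⁆ + ⁅x, ⁅a, y⁆⁆ := leibniz_lie a x y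
    rw [hleib]
    rw [sub_lie, lie_sub]
    abel
  have hadE : ∀ u : h, adL (E u) = E * adL u - adL u * E := by
    intro u
    ext w
    simp only [hadL_apply, LinearMap.sub_apply, Module.End.mul_apply]
    have h1 : (⁅E u, w⁆ : h) = E ⁅u, w⁆ - ⁅u, E w⁆ := by
      rw [hEder u w]; abel
    rw [h1]
  -- tr (E ∘ ad w) = 0
  have htrE : ∀ w : h, LinearMap.trace ℝ h (E * adL w) = 0 := by
    intro w
    have : E * adL w = φ * adL w - adL a * adL w := by
      rw [hEdef]; rw [sub_mul]
    rw [this, map_sub]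
    rw [← hf, ← hκ, ha w, sub_self]
  clear_value E
  -- κ (E u) v = tr (E ∘ ad ⁅u,v⁆)
  have hkey : ∀ u v : h, κ (E u) v = LinearMap.trace ℝ h (E * adL ⁅u, v⁆) := by
    intro u v
    have hadbr : adL ⁅u, v⁆ = adL u * adL v - adL v * adL u := by
      have h1 : LieAlgebra.ad ℝ h ⁅u, v⁆ = ⁅LieAlgebra.ad ℝ h u, LieAlgebra.ad ℝ h v⁆ :=
        LieHom.map_lie _ _ _
      have h2 : (⁅LieAlgebra.ad ℝ h u, LieAlgebra.ad ℝ h v⁆ : Module.End ℝ h)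
          = LieAlgebra.ad ℝ h u * LieAlgebra.ad ℝ h v
            - LieAlgebra.ad ℝ h v * LieAlgebra.ad ℝ h u := Ring.lie_def _ _
      rw [hadL]
      exact h1.trans h2
    set P : Module.End ℝ h := adL u with hP
    set Q : Module.End ℝ h := adL v with hQ
    have h3 : (E * P - P * E) * Q = E * (P * Q) - P * (E * Q) := by noncomm_ring
    have h4 : E * (P * Q - Q * P) = E * (P * Q) - E * (Q * P) := by noncomm_ring
    have h5 : (E * Q) * P = E * (Q * P) := by noncomm_ring
    calc κ (E u) v = LinearMap.trace ℝ h (adL (E u) * Q) := hκ _ _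
      _ = LinearMap.trace ℝ h ((E * P - P * E) * Q) := by rw [hadE u]
      _ = LinearMap.trace ℝ h (E * (P * Q)) - LinearMap.trace ℝ h (P * (E * Q)) := by
          rw [h3, map_sub]
      _ = LinearMap.trace ℝ h (E * (P * Q)) - LinearMap.trace ℝ h ((E * Q) * P) := by
          rw [LinearMap.trace_mul_comm ℝ P (E * Q)]
      _ = LinearMap.trace ℝ h (E * (P * Q - Q * P)) := by rw [h4, map_sub, h5]
      _ = LinearMap.trace ℝ h (E * adL ⁅u, v⁆) := by rw [hadbr]
  -- E u is central for every u
  have hEcent : ∀ u z : h, ⁅E u, z⁆ = 0 := by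
    intro u z
    have hκE : κ (E u) (E u) = 0 := by
      rw [hkey u (E u), htrE]
    have had0 : adL (E u) = 0 := hκzero _ hκE
    have := congrArg (fun g => g z) had0
    simpa [hadL_apply] using this
  -- E vanishes on brackets
  have hEbr : ∀ x y : h, E ⁅x, y⁆ = 0 := by
    intro x y
    rw [hEder x y, hEcent x y]
    have : (⁅x, E y⁆ : h) = -⁅E y, x⁆ := (lie_skew _ _).symm
    rw [this, hEcent y x, neg_zero, add_zero]
  -- E vanishes on s, in particular on a
  have hEs : s ≤ LinearMap.ker E := by
    rw [hsdef, Submodule.span_le]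
    rintro u ⟨x, y, rfl⟩
    simpa using hEbr x y
  have hEa : E a = 0 := hEs a₀.2
  -- hence φ a = ⁅a, a⁆ = 0, so a = 0
  have hφa : φ a = 0 := by
    have : φ a - ⁅a, a⁆ = 0 := by
      have := hEa
      simpa [hEdef, hadL_apply] using this
    rw [lie_self, sub_zero] at this
    exact this
  have ha0 : a = 0 := hφinj a hφa
  -- finish
  intro X Y
  have hE_XY : E ⁅X, Y⁆ = 0 := hEbr X Y
  have : φ ⁅X, Y⁆ = 0 := by
    have := hE_XY
    rw [hEdef] at this
    simp only [LinearMap.sub_apply, hadL_apply, ha0, zero_lie] at this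
    rwa [sub_zero] at this
  exact hφinj _ this
end
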